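/- (Shadow Lemma on the horofunction boundary.) Suppose G contains a contracting element and let {μ_x}_{x∈Y} be an ω-dimensional G-equivariant conformal density on ∂_hY for some ω > 0. There exists L > 0 (depending only on C, B₀) such that for every admissible triple F (with constants C, B₀) satisfying min_{f∈F} d(o,fo) ≥ L there exists r₀ > 0 so that for all r ≥ r₀ there are constants c₁ > 0 (independent of r) and c₂ = c₂(r) > 0 with c₁·e^{−ω·d(o,go)} ≤ μ_o(Π_o^F(go,r)) ≤ μ_o(Π_o(go,r)) ≤ c₂·e^{−ω·d(o,go)} for every g ∈ G. -/

import Mathlib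

open Metric Filter Topology Set MeasureTheory Pointwise

noncomputable section

namespace ConfDyn

/-- `γ` is (the image of) a geodesic segment from `x` to `y`. -/
def IsGeodesicIn (Y : Type*) [MetricSpace Y] (γ : Set Y) (x y : Y) : Prop :=
  ∃ f : ℝ → Y, f 0 = x ∧ f (dist x y) = y ∧
    (∀ s ∈ Set.Icc (0 : ℝ) (dist x y), ∀ t ∈ Set.Icc (0 : ℝ) (dist x y),
      dist (f s) (f t) = |s - t|) ∧
    γ = f '' Set.Icc (0 : ℝ) (dist x y)

/-- `Y` is a geodesic metric space. -/
def GeodesicSpace (Y : Type*) [MetricSpace Y] : Prop :=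
  ∀ x y : Y, ∃ γ : Set Y, IsGeodesicIn Y γ x y

/-- the shortest projection of the point `y` to the subset `X`. -/
def projSet {Y : Type*} [MetricSpace Y] (X : Set Y) (y : Y) : Set Y :=
  {x ∈ X | dist y x = Metric.infDist y X}

/-- the shortest projection of the subset `A` to the subset `X`. -/
def projSetOf {Y : Type*} [MetricSpace Y] (X A : Set Y) : Set Y :=
  ⋃ a ∈ A, projSet X a

/-- `d_X(x,y)`, the diameter of `π_X(x) ∪ π_X(y)`. -/
def projDist {Y : Type*} [MetricSpace Y] (X : Set Y) (x y : Y) : ENNReal :=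
  EMetric.diam (projSet X x ∪ projSet X y)

/-- `X` is a `C`-contracting subset: any geodesic segment at distance at least `C`
from `X` has shortest projection to `X` of diameter at most `C`. -/
def IsContractingSet {Y : Type*} [MetricSpace Y] (C : ℝ) (X : Set Y) : Prop :=
  ∀ x y : Y, ∀ γ : Set Y, IsGeodesicIn Y γ x y →
    (∀ p ∈ γ, C ≤ Metric.infDist p X) →
    EMetric.diam (projSetOf X γ) ≤ ENNReal.ofReal C

/-- the Busemann function based at `o` associated to `y`, `b_y(x) = d(x,y) - d(o,y)`. -/
def busemannCM {Y : Type*} [MetricSpace Y] (o y : Y) : C(Y, ℝ) :=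
  ⟨fun x => dist x y - dist o y,
    (continuous_id.dist continuous_const).sub continuous_const⟩

/-- the horofunction compactification of `Y`: the closure of `{b_y : y ∈ Y}` in
`C(Y,ℝ)` with the compact-open topology. -/
def horoCpt (Y : Type*) [MetricSpace Y] (o : Y) : Set C(Y, ℝ) :=
  closure (Set.range (busemannCM o))

/-- `ξ` is a point of the horofunction boundary `∂_h Y`. -/
def IsHoroPoint {Y : Type*} [MetricSpace Y] (o : Y) (ξ : C(Y, ℝ)) : Prop :=
  ξ ∈ horoCpt Y o ∧ ∀ y : Y, ξ ≠ busemannCM o y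

/-- a sequence of points of `Y` converges to `ξ` in the horofunction compactification. -/
def HoroConv {Y : Type*} [MetricSpace Y] (o : Y) (u : ℕ → Y) (ξ : C(Y, ℝ)) : Prop :=
  Filter.Tendsto (fun n => busemannCM o (u n)) atTop (nhds ξ)

/-- two horofunctions have (K-)finite difference for some K. -/
def FinDiff {Y : Type*} [MetricSpace Y] (ξ η : C(Y, ℝ)) : Prop :=
  ∃ K : ℝ, ∀ z : Y, |ξ z - η z| ≤ K

/-- the locus of a subset of the horofunction boundary. -/
def locus {Y : Type*} [MetricSpace Y] (o : Y) (Λ : Set C(Y, ℝ)) : Set C(Y, ℝ) :=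
  {η | IsHoroPoint o η ∧ ∃ ξ ∈ Λ, FinDiff ξ η}

/-- the finite-difference relation as a setoid on `C(Y,ℝ)`. -/
def finDiffSetoid (Y : Type*) [MetricSpace Y] : Setoid C(Y, ℝ) where
  r := FinDiff
  iseqv := ⟨fun ξ => ⟨0, fun z => by simp⟩,
    fun h => h.imp (fun K hK z => by rw [abs_sub_comm]; exact hK z),
    fun h₁ h₂ => by
      obtain ⟨K₁, hK₁⟩ := h₁
      obtain ⟨K₂, hK₂⟩ := h₂
      exact ⟨K₁ + K₂, fun z => (abs_sub_le _ _ _).trans (add_le_add (hK₁ z) (hK₂ z))⟩⟩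

/-- the limit set of a subset `X ⊆ Y` in the horofunction boundary. -/
def limitSetOf {Y : Type*} [MetricSpace Y] (o : Y) (X : Set Y) : Set C(Y, ℝ) :=
  {ξ | IsHoroPoint o ξ ∧ ∃ u : ℕ → Y, (∀ n, u n ∈ X) ∧ HoroConv o u ξ}

/-- accumulation points of a sequence of points of `Y` in the horofunction boundary. -/
def accPoints {Y : Type*} [MetricSpace Y] (o : Y) (u : ℕ → Y) : Set C(Y, ℝ) :=
  {ξ | IsHoroPoint o ξ ∧ ∃ φ : ℕ → ℕ, StrictMono φ ∧ HoroConv o (u ∘ φ) ξ}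

/-- `X` is a quasi-geodesic: the image of a quasi-isometric embedding of a real interval. -/
def IsQuasiGeodesicSet {Y : Type*} [MetricSpace Y] (X : Set Y) : Prop :=
  ∃ (c : ℝ) (I : Set ℝ) (φ : ℝ → Y), 1 ≤ c ∧ I.OrdConnected ∧ X = φ '' I ∧
    ∀ s ∈ I, ∀ t ∈ I,
      (1 / c) * |s - t| - c ≤ dist (φ s) (φ t) ∧ dist (φ s) (φ t) ≤ c * |s - t| + c

section GroupAction

variable {Y : Type*} [MetricSpace Y] {G : Type*} [Group G] [MulAction G Y]

/-- `G` acts by isometries on `Y`. -/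
def IsometricAction (G Y : Type*) [Group G] [MulAction G Y] [MetricSpace Y] : Prop :=
  ∀ g : G, Isometry (fun y : Y => g • y)

/-- the action of `G` on `Y` is (metrically) proper. -/
def ProperAction (G Y : Type*) [Group G] [MulAction G Y] [MetricSpace Y] : Prop :=
  ∀ B : Set Y, Bornology.IsBounded B → Set.Finite {g : G | (g • B) ∩ B ≠ ∅}

/-- `G` is non-elementary: no finite-index subgroup is trivial or infinite cyclic. -/
def NonElementary (G : Type*) [Group G] : Prop :=
  ∀ H : Subgroup G, H.index ≠ 0 → ∀ g : G, H ≠ Subgroup.zpowers g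

/-- the orbit of `o` under the cyclic group generated by `f`. -/
def cyclicOrbit (o : Y) (f : G) : Set Y :=
  {y : Y | ∃ n : ℤ, y = f ^ n • o}

/-- `f` is a contracting element with `C`-contracting orbit: it has infinite order,
`n ↦ fⁿ • o` is a quasi-isometric embedding of `ℤ`, and `⟨f⟩ • o` is `C`-contracting. -/
def IsContractingElt (o : Y) (C : ℝ) (f : G) : Prop :=
  (∀ n : ℤ, n ≠ 0 → f ^ n ≠ 1) ∧
  (∃ c : ℝ, 1 ≤ c ∧ ∀ m n : ℤ,
      (1 / c) * |(m : ℝ) - (n : ℝ)| - c ≤ dist (f ^ m • o) (f ^ n • o) ∧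
      dist (f ^ m • o) (f ^ n • o) ≤ c * |(m : ℝ) - (n : ℝ)| + c) ∧
  IsContractingSet C (cyclicOrbit o f)

/-- `f` is a contracting element. -/
def IsContractingEltAny (o : Y) (f : G) : Prop :=
  ∃ C : ℝ, 1 ≤ C ∧ IsContractingElt o C f

/-- the elementary group `E(f)`: elements moving `⟨f⟩ • o` a finite Hausdorff distance. -/
def EGroup (o : Y) (f : G) : Set G :=
  {g : G | EMetric.hausdorffEdist (g • cyclicOrbit o f) (cyclicOrbit o f) ≠ ⊤}

/-- the axis `Ax(f) = E(f) • o`. -/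
def axisOf (o : Y) (f : G) : Set Y :=
  (fun g : G => g • o) '' EGroup o f

/-- the family of all `G`-translated axes of `h` and `k`. -/
def axesPairFam (o : Y) (h k : G) : Set (Set Y) :=
  {S | ∃ g : G, S = g • axisOf o h ∨ S = g • axisOf o k}

/-- `h` and `k` are independent contracting elements: the family of their translated
axes has bounded projection. -/
def IndepElts (o : Y) (h k : G) : Prop :=
  ∃ B : ℝ, 0 < B ∧ ∀ U ∈ axesPairFam o h k, ∀ V ∈ axesPairFam o h k,
    U ≠ V → EMetric.diam (projSetOf U V) ≤ ENNReal.ofReal B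

/-- the family of all `G`-translated axes of the triple `f₁, f₂, f₃`. -/
def axesTripleFam (o : Y) (f₁ f₂ f₃ : G) : Set (Set Y) :=
  {S | ∃ g : G, S = g • axisOf o f₁ ∨ S = g • axisOf o f₂ ∨ S = g • axisOf o f₃}

/-- `F = {f₁,f₂,f₃}` is an admissible triple with constants `C`, `B₀`: three pairwise
independent contracting elements whose translated axes are `C`-contracting with
`B₀`-bounded projection. -/
def IsAdmissibleTriple (o : Y) (C B₀ : ℝ) (f₁ f₂ f₃ : G) : Prop :=
  f₁ ≠ f₂ ∧ f₁ ≠ f₃ ∧ f₂ ≠ f₃ ∧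
  IsContractingEltAny o f₁ ∧ IsContractingEltAny o f₂ ∧ IsContractingEltAny o f₃ ∧
  IndepElts o f₁ f₂ ∧ IndepElts o f₁ f₃ ∧ IndepElts o f₂ f₃ ∧
  (∀ S ∈ axesTripleFam o f₁ f₂ f₃, IsContractingSet C S) ∧
  (∀ U ∈ axesTripleFam o f₁ f₂ f₃, ∀ V ∈ axesTripleFam o f₁ f₂ f₃,
    U ≠ V → EMetric.diam (projSetOf U V) ≤ ENNReal.ofReal B₀)

/-- the geodesic `γ` contains an `(r,f)`-barrier at `g • o`. -/
def HasBarrier (o : Y) (r : ℝ) (f g : G) (γ : Set Y) : Prop :=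
  Metric.infDist (g • o) γ ≤ r ∧ Metric.infDist ((g * f) • o) γ ≤ r

/-- the partial cone `Ω_x^F(g • o, r)`. -/
def partialCone (o x : Y) (f₁ f₂ f₃ : G) (g : G) (r : ℝ) : Set Y :=
  {z | ∃ γ : Set Y, IsGeodesicIn Y γ x z ∧
      (HasBarrier o r f₁ g γ ∨ HasBarrier o r f₂ g γ ∨ HasBarrier o r f₃ g γ)}

/-- the partial shadow `Π_x^F(g • o, r)`: accumulation points of the partial cone in
the horofunction boundary. -/
def partialShadow (o x : Y) (f₁ f₂ f₃ : G) (g : G) (r : ℝ) : Set C(Y, ℝ) :=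
  {ξ | IsHoroPoint o ξ ∧ ∃ u : ℕ → Y, (∀ n, u n ∈ partialCone o x f₁ f₂ f₃ g r) ∧
      HoroConv o u ξ}

/-- `ξ` is an `(r,F)`-conical point. -/
def IsConicalPt (o : Y) (f₁ f₂ f₃ : G) (r : ℝ) (ξ : C(Y, ℝ)) : Prop :=
  ∃ g₀ : G, Set.Infinite {g : G | ξ ∈ partialShadow o (g₀ • o) f₁ f₂ f₃ g r}

/-- the usual cone `Ω_x(y,r)`. -/
def usualCone (x y : Y) (r : ℝ) : Set Y :=
  {z | ∃ γ : Set Y, IsGeodesicIn Y γ x z ∧ ∃ p ∈ γ, dist p y ≤ r}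

/-- the usual shadow `Π_x(y,r)`. -/
def usualShadow (o x y : Y) (r : ℝ) : Set C(Y, ℝ) :=
  {ξ | IsHoroPoint o ξ ∧ ∃ u : ℕ → Y, (∀ n, u n ∈ usualCone x y r) ∧ HoroConv o u ξ}

/-- the set `Λ_c(G)` of conical points of the action. -/
def conicalSet (G : Type*) {Y : Type*} [Group G] [MulAction G Y] [MetricSpace Y]
    (o : Y) : Set C(Y, ℝ) :=
  {ξ | ∃ r : ℝ, 0 < r ∧ ∃ g₀ : G, ∃ u : ℕ → G,
      Filter.Tendsto (fun n => dist o (u n • o)) atTop atTop ∧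
      ∀ n, ξ ∈ usualShadow o (g₀ • o) (u n • o) r}

/-- the attracting fixed-point set `[h⁺]`: the locus of the accumulation points of
`{hⁿ o : n > 0}` in the horofunction boundary. -/
def attrFix (o : Y) (h : G) : Set C(Y, ℝ) :=
  locus o (accPoints o (fun n : ℕ => h ^ (n + 1) • o))

/-- the repelling fixed-point set `[h⁻]`. -/
def repFix (o : Y) (h : G) : Set C(Y, ℝ) :=
  locus o (accPoints o (fun n : ℕ => h ^ (-(n + 1) : ℤ) • o))

/-- the limit set `Λ G y` of the orbit `G • y` in the horofunction boundary. -/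
def orbitLimitSet (G : Type*) {Y : Type*} [Group G] [MulAction G Y] [MetricSpace Y]
    (o y : Y) : Set C(Y, ℝ) :=
  {ξ | IsHoroPoint o ξ ∧ ∃ u : ℕ → G,
      Filter.Tendsto (fun n => busemannCM o (u n • y)) atTop (nhds ξ)}

/-- the action of an isometry `g` on horofunctions. -/
def horoAct [ContinuousConstSMul G Y] (o : Y) (g : G) (ξ : C(Y, ℝ)) : C(Y, ℝ) :=
  ⟨fun y => ξ (g⁻¹ • y) - ξ (g⁻¹ • o),
    (ξ.continuous.comp (continuous_const_smul g⁻¹)).sub continuous_const⟩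

/-- the number of orbit points of `Γ ⊆ G` in the closed ball of radius `R` around `o`. -/
def orbitCount (G : Type*) {Y : Type*} [Group G] [MulAction G Y] [MetricSpace Y]
    (o : Y) (Γ : Set G) (R : ℝ) : ℕ :=
  Nat.card {g : G // g ∈ Γ ∧ dist o (g • o) ≤ R}

/-- the critical exponent `ω_Γ` of a subset `Γ ⊆ G`. -/
def critExp (G : Type*) {Y : Type*} [Group G] [MulAction G Y] [MetricSpace Y]
    (o : Y) (Γ : Set G) : ℝ :=
  Filter.limsup (fun R : ℝ => Real.log (orbitCount G o Γ R) / R) atTop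

/-- an `ω`-dimensional `G`-equivariant conformal density on the horofunction boundary:
a family of finite measures supported on `∂_h Y`, normalized at `o`, `G`-equivariant,
with conformal derivative `dμ_x/dμ_y(ξ) = e^{-ω·B_ξ(x,y)}`. -/
def IsConformalDensity (G : Type*) {Y : Type*} [Group G] [MulAction G Y] [MetricSpace Y]
    [ContinuousConstSMul G Y] [MeasurableSpace C(Y, ℝ)]
    (o : Y) (ω : ℝ) (μ : Y → MeasureTheory.Measure C(Y, ℝ)) : Prop :=
  (∀ x : Y, MeasureTheory.IsFiniteMeasure (μ x)) ∧
  (∀ x : Y, μ x {ξ : C(Y, ℝ) | ¬ IsHoroPoint o ξ} = 0) ∧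
  μ o Set.univ = 1 ∧
  (∀ g : G, ∀ x : Y, MeasureTheory.Measure.map (horoAct o g) (μ x) = μ (g • x)) ∧
  (∀ x y : Y, μ x = (μ y).withDensity
      (fun ξ : C(Y, ℝ) => ENNReal.ofReal (Real.exp (-ω * (ξ x - ξ y)))))

end GroupAction

/-!
Upper bound: if `ξ ∈ Π_o(go, r)` then `ξ(go) ≤ 2r - d(o, go)`, since the approximating points lie
beyond `go` on geodesics from `o`; the conformal relation `dμ_o = e^{-ω(ξ(o) - ξ(go))} dμ_{go}`
turns this into `μ_o(Π_o(go, r)) ≤ e^{2ωr} e^{-ω d(o, go)}`. The partial shadow lies in the usual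
one because a barrier at `go` puts `go` within `r` of the geodesic.

Lower bound: fix `f ∈ F`; its orbit `n ↦ fⁿo` is a contracting quasi-geodesic. Let `Λ⁺` be the
set of horofunctions approached by points whose projection to the axis lies far out on its positive
end, and `Λ⁻` the same for the negative end. Both have positive `μ_o`-measure: otherwise almost
every `ξ` grows linearly along that end, `ξ(fⁿo) ≥ n/c - κ`, contradicting
`∫ e^{-ω ξ(fⁿo)} dμ_o = μ_{fⁿo}(∂Y) = 1`. Given `g`, pick the end of the axis opposite to the
projection of `g⁻¹o`. By contraction, a geodesic from `g⁻¹o` to a point projecting far out on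
that end passes within a fixed distance of `o`, so after translating by `g` it carries an
`(r, f)`-barrier at `go` once `r` is large. Hence `g·Λ^±` lies in `Π_o^F(go, r)`, and conformality
gives `μ_o(Π_o^F(go, r)) ≥ e^{-ω d(o, go)} min(μ_o Λ⁺, μ_o Λ⁻)`.
-/

section Geodesic

variable {Y : Type*} [MetricSpace Y] {f : ℝ → Y} {I : Set ℝ} {a b : ℝ}

theorem isometry_domRestrict_iff :
    Isometry (I.domRestrict f) ↔ ∀ s ∈ I, ∀ t ∈ I, dist (f s) (f t) = dist s t := by
  simp only [isometry_iff_dist_eq, Subtype.forall, domRestrict_apply, Subtype.dist_eq]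

theorem dist_eq_of_isometry_domRestrict (hf : Isometry (I.domRestrict f)) {s t : ℝ} (hs : s ∈ I)
    (ht : t ∈ I) : dist (f s) (f t) = dist s t :=
  isometry_domRestrict_iff.1 hf s hs t ht

theorem dist_eq_sub_of_isometry_domRestrict (hf : Isometry (I.domRestrict f)) {s t : ℝ} (hs : s ∈ I)
    (ht : t ∈ I) (hst : s ≤ t) : dist (f s) (f t) = t - s := by
  rw [dist_eq_of_isometry_domRestrict hf hs ht, Real.dist_eq, abs_sub_comm,
    abs_of_nonneg (by linarith)]

theorem continuousOn_of_isometry_domRestrict (hf : Isometry (I.domRestrict f)) :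
    ContinuousOn f I :=
  continuousOn_iff_continuous_domRestrict.2 hf.continuous

theorem isometry_domRestrict_mono (hf : Isometry (I.domRestrict f)) {J : Set ℝ} (hJ : J ⊆ I) :
    Isometry (J.domRestrict f) :=
  isometry_domRestrict_iff.2 fun _ hs _ ht => dist_eq_of_isometry_domRestrict hf (hJ hs) (hJ ht)

theorem isometry_domRestrict_comp_neg (hf : Isometry ((Icc a b).domRestrict f)) :
    Isometry ((Icc (-b) (-a)).domRestrict fun t => f (-t)) := by
  refine isometry_domRestrict_iff.2 fun s hs t ht => ?_
  rw [dist_eq_of_isometry_domRestrict hf ⟨le_neg.1 hs.2, neg_le.1 hs.1⟩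
    ⟨le_neg.1 ht.2, neg_le.1 ht.1⟩, dist_neg_neg]

theorem IsGeodesicIn.exists_isometry {γ : Set Y} {x z : Y} (hγ : IsGeodesicIn Y γ x z) :
    ∃ f : ℝ → Y, f 0 = x ∧ f (dist x z) = z ∧ Isometry ((Icc 0 (dist x z)).domRestrict f) ∧
      γ = f '' Icc 0 (dist x z) := by
  obtain ⟨f, h0, hd, hf, rfl⟩ := hγ
  exact ⟨f, h0, hd,
    isometry_domRestrict_iff.2 fun s hs t ht => by rw [hf s hs t ht, Real.dist_eq], rfl⟩

theorem GeodesicSpace.exists_isometry (hY : GeodesicSpace Y) (x z : Y) :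
    ∃ f : ℝ → Y, f 0 = x ∧ f (dist x z) = z ∧ Isometry ((Icc 0 (dist x z)).domRestrict f) := by
  obtain ⟨γ, hγ⟩ := hY x z
  obtain ⟨f, h0, hd, hf, -⟩ := hγ.exists_isometry
  exact ⟨f, h0, hd, hf⟩

theorem isGeodesicIn_image (hf : Isometry ((Icc a b).domRestrict f)) (hab : a ≤ b) :
    IsGeodesicIn Y (f '' Icc a b) (f a) (f b) := by
  have hd : dist (f a) (f b) = b - a :=
    dist_eq_sub_of_isometry_domRestrict hf (left_mem_Icc.2 hab) (right_mem_Icc.2 hab) hab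
  have hshift : ∀ s ∈ Icc (0 : ℝ) (b - a), a + s ∈ Icc a b := fun s hs =>
    ⟨by linarith [hs.1], by linarith [hs.2]⟩
  refine ⟨fun s => f (a + s), by simp, by rw [hd]; ring_nf, fun s hs t ht => ?_, ?_⟩
  · rw [hd] at hs ht
    rw [dist_eq_of_isometry_domRestrict hf (hshift s hs) (hshift t ht), Real.dist_eq]
    ring_nf
  · rw [hd, ← image_image f (a + ·), image_const_add_Icc]
    ring_nf

theorem IsGeodesicIn.left_mem {γ : Set Y} {x z : Y} (hγ : IsGeodesicIn Y γ x z) : x ∈ γ := by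
  obtain ⟨f, h0, -, -, rfl⟩ := hγ.exists_isometry
  exact ⟨0, left_mem_Icc.2 dist_nonneg, h0⟩

theorem IsGeodesicIn.isCompact {γ : Set Y} {x z : Y} (hγ : IsGeodesicIn Y γ x z) :
    IsCompact γ := by
  obtain ⟨f, -, -, hf, rfl⟩ := hγ.exists_isometry
  exact isCompact_Icc.image_of_continuousOn (continuousOn_of_isometry_domRestrict hf)

theorem IsGeodesicIn.dist_add_dist_eq {γ : Set Y} {x z p : Y} (hγ : IsGeodesicIn Y γ x z)
    (hp : p ∈ γ) : dist x p + dist p z = dist x z := by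
  obtain ⟨f, h0, hd, hf, rfl⟩ := hγ.exists_isometry
  obtain ⟨t, ht, rfl⟩ := hp
  have h0d := left_mem_Icc.2 (dist_nonneg : 0 ≤ dist x z)
  have hdd := right_mem_Icc.2 (dist_nonneg : 0 ≤ dist x z)
  conv_lhs => rw [← h0, ← hd]
  rw [dist_eq_sub_of_isometry_domRestrict hf h0d ht ht.1,
    dist_eq_sub_of_isometry_domRestrict hf ht hdd ht.2]
  ring

theorem IsGeodesicIn.smul {G : Type*} [Group G] [MulAction G Y] (hiso : IsometricAction G Y)
    {γ : Set Y} {x z : Y} (hγ : IsGeodesicIn Y γ x z) (g : G) :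
    IsGeodesicIn Y (g • γ) (g • x) (g • z) := by
  obtain ⟨f, h0, hd, hf, rfl⟩ := hγ
  have hdist : dist (g • x) (g • z) = dist x z := (hiso g).dist_eq x z
  refine ⟨fun t => g • f t, by simp [h0], by simp [hdist, hd], fun s hs t ht => ?_, ?_⟩
  · rw [hdist] at hs ht
    rw [(hiso g).dist_eq, hf s hs t ht]
  · rw [hdist, ← image_smul, image_image]

end Geodesic

theorem forall_Icc_le_of_forall_Ioo_le {φ : ℝ → ℝ} {a b c : ℝ} (hφ : ContinuousOn φ (Icc a b))
    (hab : a < b) (h : ∀ s ∈ Ioo a b, c ≤ φ s) : ∀ s ∈ Icc a b, c ≤ φ s := by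
  have hcl : IsClosed (Icc a b ∩ φ ⁻¹' Ici c) :=
    hφ.preimage_isClosed_of_isClosed isClosed_Icc isClosed_Ici
  have hsub : closure (Ioo a b) ⊆ Icc a b ∩ φ ⁻¹' Ici c :=
    closure_minimal (fun s hs => ⟨Ioo_subset_Icc_self hs, h s hs⟩) hcl
  rw [closure_Ioo hab.ne] at hsub
  exact fun s hs => (hsub hs).2

section ContractingSet

variable {Y : Type*} [MetricSpace Y] {C : ℝ} {X : Set Y} {f : ℝ → Y} {a b : ℝ}

theorem projSet_nonempty [ProperSpace Y] (hXc : IsClosed X) (hXne : X.Nonempty) (y : Y) :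
    (projSet X y).Nonempty := by
  obtain ⟨x, hx, h⟩ := hXc.exists_infDist_eq_dist hXne y
  exact ⟨x, hx, h.symm⟩

theorem self_mem_projSet {x : Y} (hx : x ∈ X) : x ∈ projSet X x :=
  ⟨hx, by rw [dist_self, infDist_zero_of_mem hx]⟩

theorem IsContractingSet.dist_le (hX : IsContractingSet C X) (hC : 0 ≤ C) {γ : Set Y} {x z : Y}
    (hγ : IsGeodesicIn Y γ x z) (hfar : ∀ p ∈ γ, C ≤ infDist p X) {p q : Y}
    (hp : p ∈ projSetOf X γ) (hq : q ∈ projSetOf X γ) : dist p q ≤ C := by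
  have h := (EMetric.edist_le_diam_of_mem hp hq).trans (hX x z γ hγ hfar)
  rwa [edist_dist, ENNReal.ofReal_le_ofReal_iff hC] at h

theorem IsContractingSet.dist_le_of_forall_le_infDist (hX : IsContractingSet C X) (hC : 0 ≤ C)
    (hf : Isometry ((Icc a b).domRestrict f)) (hab : a ≤ b)
    (hfar : ∀ s ∈ Icc a b, C ≤ infDist (f s) X) {u v : Y} (hu : u ∈ projSet X (f a))
    (hv : v ∈ projSet X (f b)) : dist u v ≤ C :=
  hX.dist_le hC (isGeodesicIn_image hf hab) (by rintro - ⟨s, hs, rfl⟩; exact hfar s hs)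
    (mem_biUnion (mem_image_of_mem f (left_mem_Icc.2 hab)) hu)
    (mem_biUnion (mem_image_of_mem f (right_mem_Icc.2 hab)) hv)

variable [ProperSpace Y]

/-- Take the first point in the closed `C`-neighbourhood: the segment before it stays `C`-far from
`X`, so contraction controls its projection. -/
theorem IsContractingSet.exists_entry (hX : IsContractingSet C X) (hC : 0 ≤ C)
    (hXc : IsClosed X) (hXne : X.Nonempty) (hf : Isometry ((Icc a b).domRestrict f))
    (henter : ∃ t ∈ Icc a b, infDist (f t) X ≤ C) :
    ∃ t ∈ Icc a b, infDist (f t) X ≤ C ∧ ∀ u ∈ projSet X (f a), dist (f t) u ≤ 2 * C := by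
  have hφ : ContinuousOn (fun t => infDist (f t) X) (Icc a b) :=
    (continuous_infDist_pt X).comp_continuousOn
      (continuousOn_of_isometry_domRestrict hf)
  set T := Icc a b ∩ (fun t => infDist (f t) X) ⁻¹' Iic C
  have hTc : IsClosed T := hφ.preimage_isClosed_of_isClosed isClosed_Icc isClosed_Iic
  have hTb : BddBelow T := ⟨a, fun t ht => ht.1.1⟩
  obtain ⟨hmem, hle⟩ : sInf T ∈ T := hTc.csInf_mem henter hTb
  refine ⟨sInf T, hmem, hle, fun u hu => ?_⟩
  rcases hmem.1.eq_or_lt with heq | hlt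
  · have hau : dist (f a) u ≤ C := by rw [hu.2, heq]; exact hle
    rw [← heq]
    linarith
  have hfar : ∀ s ∈ Icc a (sInf T), C ≤ infDist (f s) X :=
    forall_Icc_le_of_forall_Ioo_le (hφ.mono (Icc_subset_Icc_right hmem.2)) hlt
      fun s hs => le_of_lt <| not_le.1 fun h =>
        notMem_of_lt_csInf hs.2 hTb ⟨⟨hs.1.le, hs.2.le.trans hmem.2⟩, h⟩
  obtain ⟨v, hv⟩ := projSet_nonempty hXc hXne (f (sInf T))
  have huv := hX.dist_le_of_forall_le_infDist hC
    (isometry_domRestrict_mono hf (Icc_subset_Icc_right hmem.2)) hlt.le hfar hu hv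
  calc dist (f (sInf T)) u ≤ dist (f (sInf T)) v + dist u v := dist_triangle_right _ _ _
    _ ≤ C + C := add_le_add (by rw [hv.2]; exact hle) huv
    _ = 2 * C := by ring

theorem IsContractingSet.exists_exit (hX : IsContractingSet C X) (hC : 0 ≤ C)
    (hXc : IsClosed X) (hXne : X.Nonempty) (hf : Isometry ((Icc a b).domRestrict f))
    (henter : ∃ t ∈ Icc a b, infDist (f t) X ≤ C) :
    ∃ t ∈ Icc a b, infDist (f t) X ≤ C ∧ ∀ v ∈ projSet X (f b), dist (f t) v ≤ 2 * C := by
  obtain ⟨t, ht, hφt, hv⟩ := hX.exists_entry hC hXc hXne (isometry_domRestrict_comp_neg hf)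
    (by
      obtain ⟨t, ht, h⟩ := henter
      exact ⟨-t, ⟨neg_le_neg ht.2, neg_le_neg ht.1⟩, by rwa [neg_neg]⟩)
  refine ⟨-t, ⟨le_neg.1 ht.2, neg_le.1 ht.1⟩, hφt, fun v hv' => hv v ?_⟩
  rwa [neg_neg]

/-- The entry points on either side of `t` are `2C`-close to `u`, hence `4C`-close to each other,
and `t` lies between them. -/
theorem IsContractingSet.dist_projSet_le_of_mem_Icc (hX : IsContractingSet C X) (hC : 0 ≤ C)
    (hXc : IsClosed X) (hXne : X.Nonempty) (hf : Isometry ((Icc a b).domRestrict f))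
    (ha : infDist (f a) X ≤ C) (hb : infDist (f b) X ≤ C) {t : ℝ} (ht : t ∈ Icc a b)
    {u : Y} (hu : u ∈ projSet X (f t)) : dist (f t) u ≤ 6 * C := by
  obtain ⟨σ₂, hσ₂, -, h₂⟩ := hX.exists_entry hC hXc hXne
    (isometry_domRestrict_mono hf (Icc_subset_Icc_left ht.1)) ⟨b, ⟨ht.2, le_rfl⟩, hb⟩
  obtain ⟨σ₁, hσ₁, -, h₁⟩ := hX.exists_exit hC hXc hXne
    (isometry_domRestrict_mono hf (Icc_subset_Icc_right ht.2)) ⟨a, ⟨le_rfl, ht.1⟩, ha⟩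
  have hσ₁' : σ₁ ∈ Icc a b := ⟨hσ₁.1, hσ₁.2.trans ht.2⟩
  have hσ₂' : σ₂ ∈ Icc a b := ⟨ht.1.trans hσ₂.1, hσ₂.2⟩
  have h₁₂ : σ₂ - σ₁ ≤ 4 * C := by
    rw [← dist_eq_sub_of_isometry_domRestrict hf hσ₁' hσ₂' (hσ₁.2.trans hσ₂.1)]
    linarith [dist_triangle_right (f σ₁) (f σ₂) u, h₁ u hu, h₂ u hu]
  calc dist (f t) u ≤ dist (f t) (f σ₂) + dist (f σ₂) u := dist_triangle _ _ _
    _ ≤ (σ₂ - t) + 2 * C := by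
        rw [dist_eq_sub_of_isometry_domRestrict hf ht hσ₂' hσ₂.1]; linarith [h₂ u hu]
    _ ≤ 6 * C := by linarith [hσ₁.2]

end ContractingSet

structure ContractingAxis (Y : Type*) [MetricSpace Y] where
  pt : ℤ → Y
  c : ℝ
  C : ℝ
  one_le_c : 1 ≤ c
  C_nonneg : 0 ≤ C
  le_dist : ∀ m n : ℤ, (1 / c) * |(m : ℝ) - n| - c ≤ dist (pt m) (pt n)
  dist_le : ∀ m n : ℤ, dist (pt m) (pt n) ≤ c * |(m : ℝ) - n| + c
  contracting : IsContractingSet C (range pt)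

namespace ContractingAxis

variable {Y : Type*} [MetricSpace Y] (ax : ContractingAxis Y)

theorem c_pos : 0 < ax.c := zero_lt_one.trans_le ax.one_le_c

theorem abs_sub_le_of_dist_le {m n : ℤ} {R : ℝ} (h : dist (ax.pt m) (ax.pt n) ≤ R) :
    |(m : ℝ) - n| ≤ ax.c * (R + ax.c) := by
  have h1 := ax.le_dist m n
  rw [← div_le_iff₀' ax.c_pos, div_eq_inv_mul, ← one_div]
  linarith

theorem isClosed_range [ProperSpace Y] : IsClosed (range ax.pt) := by
  have habs : Tendsto (fun n : ℤ => |(n : ℝ)|) cofinite atTop := by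
    have := tendsto_norm_cocompact_atTop (E := ℤ)
    rw [cocompact_eq_cofinite] at this
    exact this.congr Int.norm_eq_abs
  have hdist : Tendsto (fun n => dist (ax.pt n) (ax.pt 0)) cofinite atTop := by
    refine tendsto_atTop_mono (fun n => ?_) (tendsto_atTop_add_const_right _ (-ax.c)
      (habs.const_mul_atTop (one_div_pos.2 ax.c_pos)))
    simpa [sub_eq_add_neg] using ax.le_dist n 0
  exact (isProperMap_iff_tendsto_cocompact.2 ⟨continuous_of_discreteTopology,
    by rw [cocompact_eq_cofinite]; exact tendsto_cocompact_of_tendsto_dist_comp_atTop _ hdist⟩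
    ).isClosed_range

def reverse : ContractingAxis Y where
  pt n := ax.pt (-n)
  c := ax.c
  C := ax.C
  one_le_c := ax.one_le_c
  C_nonneg := ax.C_nonneg
  le_dist m n := by simpa [abs_sub_comm, neg_add_eq_sub] using ax.le_dist (-m) (-n)
  dist_le m n := by simpa [abs_sub_comm, neg_add_eq_sub] using ax.dist_le (-m) (-n)
  contracting := by
    rw [show range (fun n => ax.pt (-n)) = range ax.pt from (Equiv.neg ℤ).surjective.range_comp _]
    exact ax.contracting

theorem range_reverse : range ax.reverse.pt = range ax.pt :=
  (Equiv.neg ℤ).surjective.range_comp _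

/-- The closed sets of points `R`-near `pt '' Iic m` and `R`-near `pt '' Ici m` cover `P`, so they
meet. -/
theorem exists_dist_pt_le_of_isPreconnected {P : Set Y} (hP : IsPreconnected P) {R : ℝ} (m : ℤ)
    (hcov : ∀ y ∈ P, ∃ n, dist y (ax.pt n) ≤ R)
    (hlo : ∃ y ∈ P, ∃ n ≤ m, dist y (ax.pt n) ≤ R)
    (hhi : ∃ y ∈ P, ∃ n ≥ m, dist y (ax.pt n) ≤ R) :
    ∃ y ∈ P, dist y (ax.pt m) ≤ R + 1 + ax.c * (ax.c * (2 * R + 2 + ax.c)) + ax.c := by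
  have hclosed (S : Set ℤ) : IsClosed {y | infDist y (ax.pt '' S) ≤ R} :=
    isClosed_le (continuous_infDist_pt _) continuous_const
  have hnear {S : Set ℤ} {y : Y} {n : ℤ} (hn : n ∈ S) (h : dist y (ax.pt n) ≤ R) :
      infDist y (ax.pt '' S) ≤ R :=
    (infDist_le_dist_of_mem (mem_image_of_mem _ hn)).trans h
  obtain ⟨y, hyP, hylo, hyhi⟩ := isPreconnected_closed_iff.1 hP _ _ (hclosed (Iic m))
    (hclosed (Ici m))
    (fun y hy => by
      obtain ⟨n, hn⟩ := hcov y hy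
      rcases le_total n m with h | h
      exacts [Or.inl (hnear (mem_Iic.2 h) hn), Or.inr (hnear (mem_Ici.2 h) hn)])
    (by obtain ⟨y, hy, n, hn, h⟩ := hlo; exact ⟨y, hy, hnear (mem_Iic.2 hn) h⟩)
    (by obtain ⟨y, hy, n, hn, h⟩ := hhi; exact ⟨y, hy, hnear (mem_Ici.2 hn) h⟩)
  obtain ⟨_, ⟨n, hnm, rfl⟩, hyn⟩ := (infDist_lt_iff ((nonempty_Iic).image _)).1
    (lt_of_le_of_lt hylo (lt_add_one R))
  obtain ⟨_, ⟨n', hmn', rfl⟩, hyn'⟩ := (infDist_lt_iff ((nonempty_Ici).image _)).1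
    (lt_of_le_of_lt hyhi (lt_add_one R))
  have hnn' := ax.abs_sub_le_of_dist_le (R := 2 * R + 2)
    (by linarith [dist_triangle_left (ax.pt n) (ax.pt n') y])
  have hnm' : |(n : ℝ) - m| ≤ |(n : ℝ) - n'| := by
    have h1 : (n : ℝ) ≤ m := by exact_mod_cast mem_Iic.1 hnm
    have h2 : (m : ℝ) ≤ n' := by exact_mod_cast mem_Ici.1 hmn'
    rw [abs_sub_comm, abs_of_nonneg (by linarith), abs_sub_comm, abs_of_nonneg (by linarith)]
    linarith
  have hdnm := ax.dist_le n m
  have := mul_le_mul_of_nonneg_left (hnm'.trans hnn') ax.c_pos.le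
  exact ⟨y, hyP, by linarith [dist_triangle y (ax.pt n) (ax.pt m)]⟩

/-- Points whose projections to the axis are this far apart in index are joined only by geodesics
that come `C`-close to the axis. -/
def threshold : ℝ := ax.c * (ax.C + ax.c) + 1

/-- `R + 1 + c (c (2R + 2 + c)) + c` from `exists_dist_pt_le_of_isPreconnected`, with the width
`R = 6C` of the tube around the axis. -/
def nearRadius : ℝ := 6 * ax.C + 1 + ax.c * (ax.c * (12 * ax.C + 2 + ax.c)) + ax.c

def growthDefect : ℝ :=
  ax.threshold / ax.c + ax.c * ax.threshold + 2 * ax.c + 2 * ax.nearRadius + 4 * ax.C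

def farRegion : Set Y := {z | ∃ b : ℤ, ax.threshold ≤ b ∧ ax.pt b ∈ projSet (range ax.pt) z}

theorem threshold_pos : 0 < ax.threshold := by
  have := ax.c_pos; have := ax.C_nonneg; unfold threshold; positivity

theorem nearRadius_pos : 0 < ax.nearRadius := by
  have := ax.c_pos; have := ax.C_nonneg; unfold nearRadius; positivity

theorem exists_infDist_le {f : ℝ → Y} {a b : ℝ} (hf : Isometry ((Icc a b).domRestrict f))
    (hab : a ≤ b) {i j : ℤ}
    (hi : ax.pt i ∈ projSet (range ax.pt) (f a)) (hj : ax.pt j ∈ projSet (range ax.pt) (f b))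
    (hij : ax.threshold ≤ j - i) : ∃ t ∈ Icc a b, infDist (f t) (range ax.pt) ≤ ax.C := by
  by_contra! hfar
  have h := ax.abs_sub_le_of_dist_le <| ax.contracting.dist_le_of_forall_le_infDist ax.C_nonneg
    hf hab (fun s hs => (hfar s hs).le) hi hj
  rw [abs_sub_comm] at h
  unfold threshold at hij
  linarith [le_abs_self ((j : ℝ) - i)]

variable [ProperSpace Y] {f : ℝ → Y} {a b : ℝ}

theorem projSet_nonempty (y : Y) : (projSet (range ax.pt) y).Nonempty :=
  ConfDyn.projSet_nonempty ax.isClosed_range (range_nonempty _) y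

theorem exists_dist_pt_le (hf : Isometry ((Icc a b).domRestrict f)) {i j m : ℤ}
    (hi : ax.pt i ∈ projSet (range ax.pt) (f a)) (hj : ax.pt j ∈ projSet (range ax.pt) (f b))
    (him : i ≤ m) (hmj : m ≤ j) (henter : ∃ t ∈ Icc a b, infDist (f t) (range ax.pt) ≤ ax.C) :
    ∃ t ∈ Icc a b, dist (f t) (ax.pt m) ≤ ax.nearRadius := by
  have hX := ax.contracting
  have hC := ax.C_nonneg
  have hXc := ax.isClosed_range
  have hXne : (range ax.pt).Nonempty := range_nonempty _
  obtain ⟨t₁, ht₁, hφ₁, h₁⟩ := hX.exists_entry hC hXc hXne hf henter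
  obtain ⟨t₂, ht₂, hφ₂, h₂⟩ := hX.exists_exit hC hXc hXne hf henter
  have hsub : uIcc t₁ t₂ ⊆ Icc a b := uIcc_subset_Icc ht₁ ht₂
  have hP : IsPreconnected (f '' uIcc t₁ t₂) := isPreconnected_uIcc.image _
    ((continuousOn_of_isometry_domRestrict hf).mono hsub)
  have hcov : ∀ y ∈ f '' uIcc t₁ t₂, ∃ n, dist y (ax.pt n) ≤ 6 * ax.C := by
    rintro _ ⟨t, ht, rfl⟩
    obtain ⟨u, hu⟩ := ax.projSet_nonempty (f t)
    obtain ⟨n, rfl⟩ := hu.1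
    refine ⟨n, ?_⟩
    rcases le_total t₁ t₂ with h | h
    · rw [uIcc_of_le h] at ht
      exact hX.dist_projSet_le_of_mem_Icc hC hXc hXne
        (isometry_domRestrict_mono hf (Icc_subset_Icc ht₁.1 ht₂.2)) hφ₁ hφ₂ ht hu
    · rw [uIcc_of_ge h] at ht
      exact hX.dist_projSet_le_of_mem_Icc hC hXc hXne
        (isometry_domRestrict_mono hf (Icc_subset_Icc ht₂.1 ht₁.2)) hφ₂ hφ₁ ht hu
  obtain ⟨_, ⟨t, ht, rfl⟩, hd⟩ := ax.exists_dist_pt_le_of_isPreconnected hP m hcov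
    ⟨f t₁, mem_image_of_mem f left_mem_uIcc, i, him, by linarith [h₁ _ hi]⟩
    ⟨f t₂, mem_image_of_mem f right_mem_uIcc, j, hmj, by linarith [h₂ _ hj]⟩
  exact ⟨t, hsub ht, hd.trans_eq (by unfold nearRadius; ring)⟩

theorem exists_isGeodesicIn_dist_le (hY : GeodesicSpace Y) {x z : Y} {i : ℤ}
    (hi : ax.pt i ∈ projSet (range ax.pt) x) (hi0 : i ≤ 0) (hz : z ∈ ax.farRegion) :
    ∃ γ, IsGeodesicIn Y γ x z ∧ ∃ p ∈ γ, dist p (ax.pt 0) ≤ ax.nearRadius := by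
  obtain ⟨j, hj, hjz⟩ := hz
  obtain ⟨f, hf0, hfd, hf⟩ := hY.exists_isometry x z
  have hd : (0 : ℝ) ≤ dist x z := dist_nonneg
  rw [← hf0] at hi
  rw [← hfd] at hjz
  have hi0' : (i : ℝ) ≤ 0 := by exact_mod_cast hi0
  have hj0 : 0 ≤ j := by exact_mod_cast (ax.threshold_pos.trans_le hj).le
  obtain ⟨t, ht, hdt⟩ := ax.exists_dist_pt_le hf hi hjz hi0 hj0
    (ax.exists_infDist_le hf hd hi hjz (by linarith))
  refine ⟨f '' Icc 0 (dist x z), ?_, f t, mem_image_of_mem f ht, hdt⟩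
  simpa only [hf0, hfd] using isGeodesicIn_image hf hd

theorem dist_add_dist_le (hY : GeodesicSpace Y) {z w : Y} (hw : w ∈ projSet (range ax.pt) z)
    (k : ℤ) : dist z w + dist w (ax.pt k) ≤ dist z (ax.pt k) + 4 * ax.C := by
  obtain ⟨f, hf0, hfd, hf⟩ := hY.exists_isometry z (ax.pt k)
  have hd : (0 : ℝ) ≤ dist z (ax.pt k) := dist_nonneg
  obtain ⟨t, ht, -, htw⟩ := ax.contracting.exists_entry ax.C_nonneg ax.isClosed_range
    (range_nonempty _) hf ⟨_, right_mem_Icc.2 hd,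
      by rw [hfd, infDist_zero_of_mem (mem_range_self k)]; exact ax.C_nonneg⟩
  rw [hf0] at htw
  have h₁ : dist z (f t) = t := by
    rw [← hf0, dist_eq_sub_of_isometry_domRestrict hf (left_mem_Icc.2 hd) ht ht.1, sub_zero]
  have h₂ : dist (f t) (ax.pt k) = dist z (ax.pt k) - t := by
    conv_lhs => rw [← hfd]
    exact dist_eq_sub_of_isometry_domRestrict hf ht (right_mem_Icc.2 hd) ht.2
  linarith [dist_triangle z (f t) w, dist_triangle w (f t) (ax.pt k), dist_comm w (f t), htw w hw]

theorem dist_add_dist_le_of_le_of_le (hY : GeodesicSpace Y) {i j m : ℤ} (him : i ≤ m)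
    (hmj : m ≤ j) : dist (ax.pt i) (ax.pt m) + dist (ax.pt m) (ax.pt j) ≤
      dist (ax.pt i) (ax.pt j) + 2 * ax.nearRadius := by
  obtain ⟨f, hf0, hfd, hf⟩ := hY.exists_isometry (ax.pt i) (ax.pt j)
  have hd : (0 : ℝ) ≤ dist (ax.pt i) (ax.pt j) := dist_nonneg
  obtain ⟨t, ht, hdt⟩ := ax.exists_dist_pt_le hf
    (by rw [hf0]; exact self_mem_projSet (mem_range_self i))
    (by rw [hfd]; exact self_mem_projSet (mem_range_self j)) him hmj
    ⟨0, left_mem_Icc.2 hd, by rw [hf0, infDist_zero_of_mem (mem_range_self i)]; exact ax.C_nonneg⟩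
  have h := (isGeodesicIn_image hf hd).dist_add_dist_eq (mem_image_of_mem f ht)
  rw [hf0, hfd] at h
  linarith [dist_triangle (ax.pt i) (f t) (ax.pt m), dist_triangle (ax.pt m) (f t) (ax.pt j),
    dist_comm (ax.pt m) (f t)]

theorem div_sub_growthDefect_le (hY : GeodesicSpace Y) {z : Y} (hz : z ∉ ax.farRegion)
    (m : ℕ) : m / ax.c - ax.growthDefect ≤ dist (ax.pt m) z - dist (ax.pt 0) z := by
  obtain ⟨w, hw⟩ := ax.projSet_nonempty z
  obtain ⟨n, rfl⟩ := hw.1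
  have hn : (n : ℝ) < ax.threshold := not_le.1 fun h => hz ⟨n, h, hw⟩
  have hc := ax.c_pos
  have hK := ax.threshold_pos
  have hρ := ax.nearRadius_pos
  suffices h : (m : ℝ) / ax.c - (ax.growthDefect - 4 * ax.C) ≤
      dist (ax.pt n) (ax.pt m) - dist (ax.pt n) (ax.pt 0) by
    linarith [ax.dist_add_dist_le hY hw m, dist_triangle (ax.pt 0) (ax.pt n) z,
      dist_comm (ax.pt 0) (ax.pt n), dist_comm z (ax.pt m), dist_comm z (ax.pt n)]
  have hm : (1 / ax.c) * m = m / ax.c := by ring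
  unfold growthDefect
  rcases le_or_gt 0 n with hn0 | hn0
  · have hn0' : (0 : ℝ) ≤ n := by exact_mod_cast hn0
    have h₁ := ax.le_dist n m
    have h₂ := ax.dist_le n 0
    push_cast at h₁ h₂
    rw [sub_zero, abs_of_nonneg hn0'] at h₂
    have e₁ := mul_le_mul_of_nonneg_left (show (m : ℝ) - ax.threshold ≤ |(n : ℝ) - m| by
      rw [abs_sub_comm]; linarith [le_abs_self ((m : ℝ) - n)]) (one_div_pos.2 hc).le
    have e₂ := mul_le_mul_of_nonneg_left hn.le hc.le
    have e₃ : 1 / ax.c * ((m : ℝ) - ax.threshold) = m / ax.c - ax.threshold / ax.c := by ring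
    linarith
  · have h₁ := ax.dist_add_dist_le_of_le_of_le hY hn0.le (Int.natCast_nonneg m)
    have h₂ := ax.le_dist m 0
    push_cast at h₂
    rw [sub_zero, abs_of_nonneg (Nat.cast_nonneg m), dist_comm] at h₂
    have e : 0 ≤ ax.threshold / ax.c + ax.c * ax.threshold := by positivity
    linarith

end ContractingAxis

section Orbit

variable {Y G : Type*} [MetricSpace Y] [Group G] [MulAction G Y] {o : Y}

theorem exists_contractingAxis {f : G} (hf : IsContractingEltAny o f) :
    ∃ ax : ContractingAxis Y, ∀ n, ax.pt n = f ^ n • o := by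
  obtain ⟨C, hC, -, ⟨c, hc, hqi⟩, hcontr⟩ := hf
  have hrange : range (fun n : ℤ => f ^ n • o) = cyclicOrbit o f := by
    ext y
    exact exists_congr fun n => eq_comm
  exact ⟨⟨fun n => f ^ n • o, c, C, hc, by linarith, fun m n => (hqi m n).1,
    fun m n => (hqi m n).2, hrange ▸ hcontr⟩, fun _ => rfl⟩

end Orbit

section Horofunction

variable {Y : Type*} [MetricSpace Y] {o : Y}

theorem horoCpt_subset_of_isClosed {S : Set C(Y, ℝ)} (hS : IsClosed S)
    (h : ∀ y, busemannCM o y ∈ S) : horoCpt Y o ⊆ S :=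
  closure_minimal (range_subset_iff.2 h) hS

theorem apply_self_eq_zero_of_mem_horoCpt {ξ : C(Y, ℝ)} (hξ : ξ ∈ horoCpt Y o) : ξ o = 0 :=
  horoCpt_subset_of_isClosed (S := {η | η o = 0})
    (isClosed_eq (continuous_eval_const o) continuous_const) (fun _ => sub_self _) hξ

theorem sub_le_dist_of_mem_horoCpt {ξ : C(Y, ℝ)} (hξ : ξ ∈ horoCpt Y o) (z z' : Y) :
    ξ z - ξ z' ≤ dist z z' :=
  horoCpt_subset_of_isClosed (S := {η | η z - η z' ≤ dist z z'})
    (isClosed_le ((continuous_eval_const z).sub (continuous_eval_const z')) continuous_const)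
    (fun y => by
      show dist z y - dist o y - (dist z' y - dist o y) ≤ dist z z'
      linarith [dist_triangle z z' y]) hξ

theorem exists_horoConv [ProperSpace Y] {ξ : C(Y, ℝ)} (hξ : ξ ∈ horoCpt Y o) :
    ∃ u : ℕ → Y, HoroConv o u ξ := by
  obtain ⟨v, hv, hlim⟩ := mem_closure_iff_seq_limit.1 hξ
  choose u hu using hv
  exact ⟨u, by simpa only [HoroConv, hu] using hlim⟩

theorem HoroConv.tendsto_apply {u : ℕ → Y} {ξ : C(Y, ℝ)} (h : HoroConv o u ξ) (y : Y) :
    Tendsto (fun n => dist y (u n) - dist o (u n)) atTop (𝓝 (ξ y)) :=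
  ((continuous_eval_const y).tendsto ξ).comp h

theorem limitSetOf_mono {X X' : Set Y} (h : X ⊆ X') : limitSetOf o X ⊆ limitSetOf o X' :=
  fun _ ⟨hξ, u, hu, hconv⟩ => ⟨hξ, u, fun n => h (hu n), hconv⟩

variable {G : Type*} [Group G] [MulAction G Y] [ContinuousConstSMul G Y]

theorem horoAct_busemannCM (hiso : IsometricAction G Y) (g : G) (y : Y) :
    horoAct o g (busemannCM o y) = busemannCM o (g • y) := by
  ext z
  show dist (g⁻¹ • z) y - dist o y - (dist (g⁻¹ • o) y - dist o y) = dist z (g • y) - dist o (g • y)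
  rw [← (hiso g).dist_eq (g⁻¹ • z), ← (hiso g).dist_eq (g⁻¹ • o), smul_inv_smul, smul_inv_smul]
  ring

theorem continuous_horoAct (g : G) : Continuous (horoAct o g : C(Y, ℝ) → C(Y, ℝ)) := by
  have h : (horoAct o g : C(Y, ℝ) → C(Y, ℝ)) = fun ξ =>
      ξ.comp ⟨(g⁻¹ • ·), continuous_const_smul g⁻¹⟩ - ContinuousMap.const Y (ξ (g⁻¹ • o)) := by
    ext ξ z
    rfl
  rw [h]
  exact (ContinuousMap.continuous_precomp _).sub
    (ContinuousMap.continuous_const'.comp (continuous_eval_const _))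

theorem horoAct_inv_horoAct (g : G) {ξ : C(Y, ℝ)} (h0 : ξ o = 0) :
    horoAct o g⁻¹ (horoAct o g ξ) = ξ := by
  ext z
  show ξ (g⁻¹ • g⁻¹⁻¹ • z) - ξ (g⁻¹ • o) - (ξ (g⁻¹ • g⁻¹⁻¹ • o) - ξ (g⁻¹ • o)) = ξ z
  simp [h0]

theorem IsHoroPoint.horoAct (hiso : IsometricAction G Y) {ξ : C(Y, ℝ)} (hξ : IsHoroPoint o ξ)
    (g : G) : IsHoroPoint o (horoAct o g ξ) := by
  refine ⟨?_, fun y hy => hξ.2 (g⁻¹ • y) ?_⟩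
  · refine closure_mono ?_
      (image_closure_subset_closure_image (continuous_horoAct g) ⟨ξ, hξ.1, rfl⟩)
    rintro _ ⟨_, ⟨y, rfl⟩, rfl⟩
    exact ⟨g • y, (horoAct_busemannCM hiso g y).symm⟩
  · rw [← horoAct_inv_horoAct g (apply_self_eq_zero_of_mem_horoCpt hξ.1), hy,
      horoAct_busemannCM hiso]

theorem limitSetOf_subset_preimage_horoAct (hiso : IsometricAction G Y) (g : G) {X X' : Set Y}
    (h : ∀ z ∈ X, g • z ∈ X') : limitSetOf o X ⊆ horoAct o g ⁻¹' limitSetOf o X' := by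
  rintro ξ ⟨hξ, u, hu, hconv⟩
  refine ⟨hξ.horoAct hiso g, fun n => g • u n, fun n => h _ (hu n), ?_⟩
  have := ((continuous_horoAct (o := o) g).tendsto ξ).comp hconv
  simpa only [HoroConv, Function.comp_def, horoAct_busemannCM hiso] using this

end Horofunction

namespace IsConformalDensity

variable {Y G : Type*} [MetricSpace Y] [Group G] [MulAction G Y] [ContinuousConstSMul G Y]
  [MeasurableSpace C(Y, ℝ)] {o : Y} {ω : ℝ} {μ : Y → Measure C(Y, ℝ)}

theorem ae_isHoroPoint (hμ : IsConformalDensity G o ω μ) (x : Y) :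
    ∀ᵐ ξ ∂μ x, IsHoroPoint o ξ := by
  simpa using measure_eq_zero_iff_ae_notMem.1 (hμ.2.1 x)

theorem exp_mul_measure_le (hμ : IsConformalDensity G o ω μ) (hω : 0 ≤ ω) (g : G)
    (S : Set C(Y, ℝ)) :
    ENNReal.ofReal (Real.exp (-ω * dist o (g • o))) * μ (g • o) S ≤ μ o S := by
  have := hμ.1 (g • o)
  rw [hμ.2.2.2.2 o (g • o), withDensity_apply', ← setLIntegral_const]
  refine lintegral_mono_ae (ae_restrict_of_ae ((hμ.ae_isHoroPoint _).mono fun ξ hξ => ?_))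
  have := sub_le_dist_of_mem_horoCpt hξ.1 o (g • o)
  exact ENNReal.ofReal_le_ofReal (Real.exp_le_exp.2 (by nlinarith))

variable [BorelSpace C(Y, ℝ)]

theorem measure_univ_smul (hμ : IsConformalDensity G o ω μ) (g : G) : μ (g • o) univ = 1 := by
  rw [← hμ.2.2.2.1 g o, Measure.map_apply (continuous_horoAct g).measurable MeasurableSet.univ,
    preimage_univ, hμ.2.2.1]

theorem lintegral_exp_eq_one (hμ : IsConformalDensity G o ω μ) (g : G) :
    ∫⁻ ξ, ENNReal.ofReal (Real.exp (-ω * (ξ (g • o) - ξ o))) ∂μ o = 1 := by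
  rw [← hμ.measure_univ_smul g, hμ.2.2.2.2 (g • o) o, withDensity_apply _ MeasurableSet.univ,
    setLIntegral_univ]

theorem measure_le_of_le_sub (hμ : IsConformalDensity G o ω μ) (hω : 0 ≤ ω) (g : G)
    {T : Set C(Y, ℝ)} {β : ℝ} (hT : ∀ ξ ∈ T, β ≤ ξ o - ξ (g • o)) :
    μ o T ≤ ENNReal.ofReal (Real.exp (-ω * β)) := by
  have := hμ.1 (g • o)
  rw [hμ.2.2.2.2 o (g • o), withDensity_apply']
  calc ∫⁻ ξ in T, ENNReal.ofReal (Real.exp (-ω * (ξ o - ξ (g • o)))) ∂μ (g • o)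
      ≤ ∫⁻ _ in T, ENNReal.ofReal (Real.exp (-ω * β)) ∂μ (g • o) :=
        setLIntegral_mono measurable_const fun ξ hξ =>
          ENNReal.ofReal_le_ofReal (Real.exp_le_exp.2 (by nlinarith [hT ξ hξ]))
    _ = ENNReal.ofReal (Real.exp (-ω * β)) * μ (g • o) T := setLIntegral_const _ _
    _ ≤ ENNReal.ofReal (Real.exp (-ω * β)) * 1 := by
        gcongr
        exact (measure_mono (subset_univ T)).trans_eq (hμ.measure_univ_smul g)
    _ = ENNReal.ofReal (Real.exp (-ω * β)) := mul_one _

theorem measure_preimage_horoAct_le (hμ : IsConformalDensity G o ω μ) (g : G)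
    (S : Set C(Y, ℝ)) : μ o (horoAct o g ⁻¹' S) ≤ μ (g • o) S := by
  rw [← hμ.2.2.2.1 g o]
  exact Measure.le_map_apply (continuous_horoAct g).measurable.aemeasurable S

end IsConformalDensity

section Shadow

variable {Y G : Type*} [MetricSpace Y] [Group G] [MulAction G Y] {o : Y}

theorem partialCone_subset_usualCone (x : Y) (f₁ f₂ f₃ g : G) (r : ℝ) :
    partialCone o x f₁ f₂ f₃ g r ⊆ usualCone x (g • o) r := by
  rintro z ⟨γ, hγ, hbar⟩
  have hr : infDist (g • o) γ ≤ r := by rcases hbar with h | h | h <;> exact h.1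
  obtain ⟨p, hp, hpd⟩ := hγ.isCompact.exists_infDist_eq_dist ⟨x, hγ.left_mem⟩ (g • o)
  exact ⟨γ, hγ, p, hp, by rwa [dist_comm, ← hpd]⟩

theorem dist_sub_dist_le_of_mem_usualCone {x y z : Y} {r : ℝ} (hz : z ∈ usualCone x y r) :
    dist y z - dist x z ≤ 2 * r - dist x y := by
  obtain ⟨γ, hγ, p, hp, hpy⟩ := hz
  linarith [hγ.dist_add_dist_eq hp, dist_triangle y p z, dist_triangle x p y, dist_comm y p]

theorem sub_le_of_mem_usualShadow {y : Y} {r : ℝ} {ξ : C(Y, ℝ)}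
    (hξ : ξ ∈ usualShadow o o y r) : ξ y - ξ o ≤ 2 * r - dist o y := by
  obtain ⟨hhoro, u, hu, hconv⟩ := hξ
  rw [apply_self_eq_zero_of_mem_horoCpt hhoro.1, sub_zero]
  exact le_of_tendsto (hconv.tendsto_apply y)
    (Eventually.of_forall fun n => dist_sub_dist_le_of_mem_usualCone (hu n))

theorem measure_usualShadow_le [ContinuousConstSMul G Y] [MeasurableSpace C(Y, ℝ)]
    [BorelSpace C(Y, ℝ)] {ω : ℝ} {μ : Y → Measure C(Y, ℝ)} (hμ : IsConformalDensity G o ω μ)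
    (hω : 0 ≤ ω) (g : G) (r : ℝ) :
    μ o (usualShadow o o (g • o) r) ≤
      ENNReal.ofReal (Real.exp (2 * ω * r) * Real.exp (-ω * dist o (g • o))) := by
  rw [← Real.exp_add, show 2 * ω * r + -ω * dist o (g • o) = -ω * (dist o (g • o) - 2 * r) by ring]
  exact hμ.measure_le_of_le_sub hω g fun ξ hξ => by linarith [sub_le_of_mem_usualShadow hξ]

theorem smul_mem_partialCone (hiso : IsometricAction G Y) {f₁ f₂ f₃ g : G} {r : ℝ}
    {γ : Set Y} {z p : Y} (hγ : IsGeodesicIn Y γ (g⁻¹ • o) z) (hp : p ∈ γ)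
    (hr : dist p o + dist o (f₁ • o) ≤ r) : g • z ∈ partialCone o o f₁ f₂ f₃ g r := by
  have hγ' := hγ.smul hiso g
  rw [smul_inv_smul] at hγ'
  have hgp : g • p ∈ g • γ := smul_mem_smul_set hp
  refine ⟨g • γ, hγ', Or.inl ⟨?_, ?_⟩⟩
  · calc infDist (g • o) (g • γ) ≤ dist (g • o) (g • p) := infDist_le_dist_of_mem hgp
      _ = dist p o := by rw [(hiso g).dist_eq, dist_comm]
      _ ≤ r := by linarith [dist_nonneg (x := o) (y := f₁ • o)]
  · calc infDist ((g * f₁) • o) (g • γ) ≤ dist ((g * f₁) • o) (g • p) :=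
          infDist_le_dist_of_mem hgp
      _ = dist (f₁ • o) p := by rw [mul_smul, (hiso g).dist_eq]
      _ ≤ r := by linarith [dist_triangle (f₁ • o) o p, dist_comm (f₁ • o) o, dist_comm p o]

end Shadow

namespace ContractingAxis

variable {Y G : Type*} [MetricSpace Y] [ProperSpace Y] [Group G] [MulAction G Y] {o : Y}
  (ax : ContractingAxis Y)

theorem le_apply_of_notMem_limitSetOf (hY : GeodesicSpace Y) (hpt0 : ax.pt 0 = o)
    {ξ : C(Y, ℝ)} (hξ : IsHoroPoint o ξ)
    (hΛ : ξ ∉ limitSetOf o ax.farRegion) (m : ℕ) : m / ax.c - ax.growthDefect ≤ ξ (ax.pt m) := by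
  obtain ⟨u, hu⟩ := exists_horoConv hξ.1
  have hev : ∀ᶠ n in atTop, u n ∉ ax.farRegion := by
    refine not_frequently.1 fun hfreq => hΛ ?_
    obtain ⟨φ, hφ, hmem⟩ := extraction_of_frequently_atTop hfreq
    exact ⟨hξ, u ∘ φ, hmem, hu.comp hφ.tendsto_atTop⟩
  refine ge_of_tendsto (hu.tendsto_apply (ax.pt m)) (hev.mono fun n hn => ?_)
  simpa only [hpt0] using ax.div_sub_growthDefect_le hY hn m

theorem limitSetOf_farRegion_subset (hY : GeodesicSpace Y) (hiso : IsometricAction G Y)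
    [ContinuousConstSMul G Y] (hpt0 : ax.pt 0 = o) {f₁ f₂ f₃ g : G} {r : ℝ} {i : ℤ}
    (hi : ax.pt i ∈ projSet (range ax.pt) (g⁻¹ • o)) (hi0 : i ≤ 0)
    (hr : ax.nearRadius + dist o (f₁ • o) ≤ r) :
    limitSetOf o ax.farRegion ⊆ horoAct o g ⁻¹' partialShadow o o f₁ f₂ f₃ g r :=
  limitSetOf_subset_preimage_horoAct hiso g fun z hz => by
    obtain ⟨γ, hγ, p, hp, hpd⟩ := ax.exists_isGeodesicIn_dist_le hY hi hi0 hz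
    rw [hpt0] at hpd
    exact smul_mem_partialCone hiso hγ hp (by linarith)

variable [ContinuousConstSMul G Y] [MeasurableSpace C(Y, ℝ)] [BorelSpace C(Y, ℝ)] {ω : ℝ}
  {μ : Y → Measure C(Y, ℝ)}

/-- Otherwise almost every horofunction would grow linearly along the positive end of the axis,
against `∫ e^{-ω ξ(pt m)} dμ_o = μ_{pt m}(univ) = 1`. -/
theorem measure_limitSetOf_farRegion_pos (hY : GeodesicSpace Y) (hω : 0 < ω)
    (hμ : IsConformalDensity G o ω μ) (h : G) (hpt : ∀ n, ax.pt n = h ^ n • o) :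
    0 < μ o (limitSetOf o ax.farRegion) := by
  have hpt0 : ax.pt 0 = o := by rw [hpt, zpow_zero, one_smul]
  refine pos_iff_ne_zero.2 fun hnull => ?_
  obtain ⟨m, hm⟩ := exists_nat_gt (ax.growthDefect * ax.c)
  set β := m / ax.c - ax.growthDefect
  have hβ : 0 < β := by rw [sub_pos, lt_div_iff₀ ax.c_pos]; exact hm
  have hae : ∀ᵐ ξ ∂μ o, β ≤ ξ (h ^ (m : ℤ) • o) - ξ o := by
    filter_upwards [hμ.ae_isHoroPoint o, measure_eq_zero_iff_ae_notMem.1 hnull] with ξ hξ hΛ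
    rw [apply_self_eq_zero_of_mem_horoCpt hξ.1, sub_zero, ← hpt]
    exact ax.le_apply_of_notMem_limitSetOf hY hpt0 hξ hΛ m
  have hle : (1 : ENNReal) ≤ ENNReal.ofReal (Real.exp (-ω * β)) :=
    calc (1 : ENNReal)
        = ∫⁻ ξ, ENNReal.ofReal (Real.exp (-ω * (ξ (h ^ (m : ℤ) • o) - ξ o))) ∂μ o :=
          (hμ.lintegral_exp_eq_one _).symm
      _ ≤ ∫⁻ _, ENNReal.ofReal (Real.exp (-ω * β)) ∂μ o :=
          lintegral_mono_ae (hae.mono fun ξ hξ =>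
            ENNReal.ofReal_le_ofReal (Real.exp_le_exp.2 (by nlinarith)))
      _ = ENNReal.ofReal (Real.exp (-ω * β)) := by rw [lintegral_const, hμ.2.2.1, mul_one]
  exact hle.not_gt (ENNReal.ofReal_lt_one.2 (Real.exp_lt_one_iff.2 (by nlinarith)))

theorem min_mul_le_measure_partialShadow (hY : GeodesicSpace Y) (hiso : IsometricAction G Y)
    (hω : 0 ≤ ω) (hμ : IsConformalDensity G o ω μ) (hpt0 : ax.pt 0 = o) (f₁ f₂ f₃ g : G)
    {r : ℝ} (hr : ax.nearRadius + dist o (f₁ • o) ≤ r) :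
    min (μ o (limitSetOf o ax.farRegion)) (μ o (limitSetOf o ax.reverse.farRegion)) *
        ENNReal.ofReal (Real.exp (-ω * dist o (g • o))) ≤
      μ o (partialShadow o o f₁ f₂ f₃ g r) := by
  set P := partialShadow o o f₁ f₂ f₃ g r
  have hpre : min (μ o (limitSetOf o ax.farRegion)) (μ o (limitSetOf o ax.reverse.farRegion)) ≤
      μ o (horoAct o g ⁻¹' P) := by
    obtain ⟨w, hw⟩ := ax.projSet_nonempty (g⁻¹ • o)
    obtain ⟨i, rfl⟩ := hw.1
    rcases le_total i 0 with hi | hi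
    · exact (min_le_left _ _).trans
        (measure_mono (ax.limitSetOf_farRegion_subset hY hiso hpt0 hw hi hr))
    · refine (min_le_right _ _).trans (measure_mono (ax.reverse.limitSetOf_farRegion_subset hY
        hiso (i := -i) (by simpa [reverse] using hpt0) ?_ (by omega) hr))
      rw [range_reverse]
      simpa [reverse] using hw
  calc _ ≤ μ o (horoAct o g ⁻¹' P) * ENNReal.ofReal (Real.exp (-ω * dist o (g • o))) := by
        gcongr
    _ ≤ ENNReal.ofReal (Real.exp (-ω * dist o (g • o))) * μ (g • o) P := by
        rw [mul_comm]
        exact mul_le_mul_right (hμ.measure_preimage_horoAct_le g P) _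
    _ ≤ μ o P := hμ.exp_mul_measure_le hω g P

end ContractingAxis

theorem statement15_general {Y G : Type*} [MetricSpace Y] [ProperSpace Y]
    [Group G] [MulAction G Y] [ContinuousConstSMul G Y]
    [MeasurableSpace C(Y, ℝ)] [BorelSpace C(Y, ℝ)]
    (hY : GeodesicSpace Y) (hiso : IsometricAction G Y)
    (o : Y)
    (C B₀ : ℝ)
    (ω : ℝ) (hω : 0 < ω) (μ : Y → MeasureTheory.Measure C(Y, ℝ))
    (hμ : IsConformalDensity G o ω μ) :
    ∃ L : ℝ, 0 < L ∧
      ∀ f₁ f₂ f₃ : G, IsAdmissibleTriple o C B₀ f₁ f₂ f₃ →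
        L ≤ dist o (f₁ • o) → L ≤ dist o (f₂ • o) → L ≤ dist o (f₃ • o) →
        ∃ r₀ c₁ : ℝ, 0 < r₀ ∧ 0 < c₁ ∧ ∀ r : ℝ, r₀ ≤ r → ∃ c₂ : ℝ, 0 < c₂ ∧
          ∀ g : G,
            ENNReal.ofReal (c₁ * Real.exp (-ω * dist o (g • o))) ≤
                μ o (partialShadow o o f₁ f₂ f₃ g r) ∧
            μ o (partialShadow o o f₁ f₂ f₃ g r) ≤ μ o (usualShadow o o (g • o) r) ∧
            μ o (usualShadow o o (g • o) r) ≤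
                ENNReal.ofReal (c₂ * Real.exp (-ω * dist o (g • o))) := by
  refine ⟨1, one_pos, fun f₁ f₂ f₃ hF _ _ _ => ?_⟩
  obtain ⟨ax, hax⟩ := exists_contractingAxis hF.2.2.2.1
  have hpt0 : ax.pt 0 = o := by rw [hax, zpow_zero, one_smul]
  set ε := min (μ o (limitSetOf o ax.farRegion)) (μ o (limitSetOf o ax.reverse.farRegion))
  have hε : 0 < ε := lt_min (ax.measure_limitSetOf_farRegion_pos hY hω hμ f₁ hax)
    (ax.reverse.measure_limitSetOf_farRegion_pos hY hω hμ f₁⁻¹ fun n => by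
      rw [inv_zpow', ← hax]; rfl)
  have hε_top : ε ≠ ⊤ := ne_top_of_le_ne_top ENNReal.one_ne_top
    ((min_le_left _ _).trans ((measure_mono (subset_univ _)).trans_eq hμ.2.2.1))
  refine ⟨ax.nearRadius + dist o (f₁ • o), ε.toReal,
    add_pos_of_pos_of_nonneg ax.nearRadius_pos dist_nonneg, ENNReal.toReal_pos hε.ne' hε_top,
    fun r hr => ⟨Real.exp (2 * ω * r), Real.exp_pos _, fun g => ⟨?_,
      measure_mono (limitSetOf_mono (partialCone_subset_usualCone o f₁ f₂ f₃ g r)),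
      measure_usualShadow_le hμ hω.le g r⟩⟩⟩
  rw [ENNReal.ofReal_mul ENNReal.toReal_nonneg, ENNReal.ofReal_toReal hε_top]
  exact ax.min_mul_le_measure_partialShadow hY hiso hω.le hμ hpt0 f₁ f₂ f₃ g hr

/-- the Shadow Lemma on the horofunction boundary: for an `ω`-dimensional
`G`-equivariant conformal density and every admissible triple with large enough minimal
displacement, `μ_o(Π_o^F(go,r)) ≍ e^{-ω d(o,go)}` for all large `r`. -/
theorem statement15 {Y G : Type*} [MetricSpace Y] [ProperSpace Y]
    [Group G] [MulAction G Y] [Countable G] [ContinuousConstSMul G Y]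
    [MeasurableSpace C(Y, ℝ)] [BorelSpace C(Y, ℝ)]
    (hY : GeodesicSpace Y) (hiso : IsometricAction G Y)
    (hprop : ProperAction G Y) (hne : NonElementary G) (o : Y)
    (hcontr : ∃ f : G, IsContractingEltAny o f)
    (C B₀ : ℝ) (hC : 1 ≤ C) (hB : 0 < B₀)
    (ω : ℝ) (hω : 0 < ω) (μ : Y → MeasureTheory.Measure C(Y, ℝ))
    (hμ : IsConformalDensity G o ω μ) :
    ∃ L : ℝ, 0 < L ∧
      ∀ f₁ f₂ f₃ : G, IsAdmissibleTriple o C B₀ f₁ f₂ f₃ →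
        L ≤ dist o (f₁ • o) → L ≤ dist o (f₂ • o) → L ≤ dist o (f₃ • o) →
        ∃ r₀ c₁ : ℝ, 0 < r₀ ∧ 0 < c₁ ∧ ∀ r : ℝ, r₀ ≤ r → ∃ c₂ : ℝ, 0 < c₂ ∧
          ∀ g : G,
            ENNReal.ofReal (c₁ * Real.exp (-ω * dist o (g • o))) ≤
                μ o (partialShadow o o f₁ f₂ f₃ g r) ∧
            μ o (partialShadow o o f₁ f₂ f₃ g r) ≤ μ o (usualShadow o o (g • o) r) ∧
            μ o (usualShadow o o (g • o) r) ≤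
                ENNReal.ofReal (c₂ * Real.exp (-ω * dist o (g • o))) :=
  statement15_general hY hiso o C B₀ ω hω μ hμ

end ConfDyn
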